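/- Work in the formal power series ring ℚ[[x₁, x₂, x₃, x₄]]. For each i let Tᵢ be the multiplicative inverse of the power series (1 − exp(−xᵢ))/xᵢ = Σ_{k≥0} (−1)^k xᵢ^k/(k+1)! (which has constant term 1), and let e₁, e₂, e₃, e₄ be the elementary symmetric polynomials in x₁, …, x₄. Then the homogeneous degree-4 component of (Σ_{1≤i<j≤4} exp(−xᵢ − xⱼ))·T₁T₂T₃T₄ equals (−6e₁⁴ + 24e₁²e₂ + 18e₂² − 114e₁e₃ + 474e₄)/720. -/

import Mathlib

/-- The formal power series `(1 - exp (-xᵢ))/xᵢ = ∑ₖ (-1)^k xᵢ^k / (k+1)!` in `ℚ[[x₁,…,x₄]]`. -/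
noncomputable def oneSubExpNegDivX (i : Fin 4) : MvPowerSeries (Fin 4) ℚ :=
  fun d => if d.support ⊆ {i} then (-1 : ℚ) ^ (d i) / ((d i + 1).factorial : ℚ) else 0

/-- The formal power series `exp (-∑_{i ∈ s} xᵢ)` in `ℚ[[x₁,…,x₄]]`: the coefficient of the
monomial `∏ᵢ xᵢ^(dᵢ)` (with all variables occurring lying in `s`) is `(-1)^(∑ dᵢ) / ∏ᵢ (dᵢ)!`. -/
noncomputable def expNegSum (s : Finset (Fin 4)) : MvPowerSeries (Fin 4) ℚ :=
  fun d => if d.support ⊆ s then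
    (-1 : ℚ) ^ (d.sum fun _ n => n) / (d.prod fun _ n => (n.factorial : ℚ)) else 0

/-- The homogeneous degree-4 component of a formal power series in `ℚ[[x₁,…,x₄]]`. -/
noncomputable def homogeneousComponent4 (F : MvPowerSeries (Fin 4) ℚ) :
    MvPowerSeries (Fin 4) ℚ :=
  fun d => if (d.sum fun _ n => n) = 4 then MvPowerSeries.coeff d F else 0

/-- The `k`-th elementary symmetric polynomial in `x₁, …, x₄`, viewed as a power series. -/
noncomputable def esymmPS (k : ℕ) : MvPowerSeries (Fin 4) ℚ :=
  ((MvPolynomial.esymm (Fin 4) ℚ k : MvPolynomial (Fin 4) ℚ) : MvPowerSeries (Fin 4) ℚ)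

/-!
The series `x / (1 - e^{-x})` inverse to `(1 - e^{-x}) / x` is the exponential generating
function `∑ B'ₙ xⁿ / n!` of the Bernoulli numbers, and `e^{-x} · x / (1 - e^{-x}) = x / (e^x - 1)`
is `∑ Bₙ xⁿ / n!`. So every summand `exp (-xᵢ - xⱼ) · ∏ₖ Tₖ` is a product of univariate series in
separate variables, `x / (e^x - 1)` in `xᵢ` and `xⱼ` and `x / (1 - e^{-x})` in the other two, and
its coefficient at `x^d` is a product of the numbers `Bₙ / n!` and `B'ₙ / n!`. In degree `4` this
leaves a finite check over the `35` monomials; off degree `4` both sides vanish, the right-hand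
side because it is homogeneous.
-/

namespace MvPowerSeries

variable {σ R : Type*} [Fintype σ] [CommSemiring R]

/-- The product `∏ᵢ fᵢ(xᵢ)` of univariate power series in separate variables. -/
noncomputable def prodUnivariate (f : σ → PowerSeries R) : MvPowerSeries σ R :=
  fun d => ∏ i, PowerSeries.coeff (d i) (f i)

theorem coeff_prodUnivariate (f : σ → PowerSeries R) (d : σ →₀ ℕ) :
    coeff d (prodUnivariate f) = ∏ i, PowerSeries.coeff (d i) (f i) :=
  rfl

theorem prodUnivariate_one : prodUnivariate (1 : σ → PowerSeries R) = 1 := by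
  classical
  ext d
  simp [coeff_prodUnivariate, PowerSeries.coeff_one, Finset.prod_boole, coeff_one,
    Finsupp.ext_iff]

theorem prodUnivariate_mul (f g : σ → PowerSeries R) :
    prodUnivariate (f * g) = prodUnivariate f * prodUnivariate g := by
  classical
  ext d
  simp only [coeff_mul, coeff_prodUnivariate, Pi.mul_apply, PowerSeries.coeff_mul,
    Finset.prod_univ_sum, ← Finset.prod_mul_distrib]
  -- a family of splittings `dᵢ = aᵢ + bᵢ` is a splitting `d = a + b`
  refine Finset.sum_nbij' (fun x => (Finsupp.equivFunOnFinite.symm fun i => (x i).1,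
      Finsupp.equivFunOnFinite.symm fun i => (x i).2)) (fun p i => (p.1 i, p.2 i))
    ?_ ?_ ?_ ?_ ?_
  · intro x hx
    simp only [Fintype.mem_piFinset, Finset.HasAntidiagonal.mem_antidiagonal] at hx ⊢
    ext i
    simp [hx i]
  · rintro ⟨a, b⟩ h
    simp only [Finset.HasAntidiagonal.mem_antidiagonal] at h
    simp [← h]
  · intro x _
    simp
  · rintro ⟨a, b⟩ _
    ext <;> simp
  · intro x _
    simp

theorem prodUnivariate_pow (f : σ → PowerSeries R) (n : ℕ) :
    prodUnivariate (f ^ n) = prodUnivariate f ^ n := by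
  induction n with
  | zero => exact prodUnivariate_one
  | succ n ih => rw [pow_succ, prodUnivariate_mul, ih, pow_succ]

variable [DecidableEq σ]

theorem coeff_prodUnivariate_mulSingle (i : σ) (φ : PowerSeries R) (d : σ →₀ ℕ) :
    coeff d (prodUnivariate (Pi.mulSingle i φ)) =
      if d.support ⊆ {i} then PowerSeries.coeff (d i) φ else 0 := by
  rw [coeff_prodUnivariate, ← Finset.mul_prod_erase _ _ (Finset.mem_univ i),
    Pi.mulSingle_eq_same,
    Finset.prod_congr rfl fun j hj => by rw [Pi.mulSingle_eq_of_ne (Finset.ne_of_mem_erase hj)]]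
  have : d.support ⊆ {i} ↔ ∀ j ∈ Finset.univ.erase i, d j = 0 := by
    simp [Finset.subset_iff, not_imp_comm]
  simp only [this, PowerSeries.coeff_one, Finset.prod_boole, mul_ite, mul_one, mul_zero]

theorem coeff_prodUnivariate_ite (s : Finset σ) {φ : PowerSeries R}
    (hφ : PowerSeries.constantCoeff φ = 1) (d : σ →₀ ℕ) :
    coeff d (prodUnivariate fun i => if i ∈ s then φ else 1) =
      if d.support ⊆ s then ∏ i, PowerSeries.coeff (d i) φ else 0 := by
  rw [coeff_prodUnivariate]
  split_ifs with h
  · refine Finset.prod_congr rfl fun i _ => ?_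
    split_ifs with hi
    · rfl
    · have : d i = 0 := Finsupp.notMem_support_iff.mp fun h' => hi (h h')
      simp [this, hφ]
  · obtain ⟨i, hi, his⟩ := Finset.not_subset.mp h
    refine Finset.prod_eq_zero (Finset.mem_univ i) ?_
    simp [his, PowerSeries.coeff_one, Finsupp.mem_support_iff.mp hi]

theorem X_eq_prodUnivariate (i : σ) :
    X i = prodUnivariate (Pi.mulSingle i (PowerSeries.X : PowerSeries R)) := by
  ext d
  rw [coeff_prodUnivariate_mulSingle, coeff_X, PowerSeries.coeff_X]
  by_cases h : d.support ⊆ {i}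
  · obtain ⟨n, rfl⟩ : ∃ n, d = Finsupp.single i n :=
      ⟨_, Finsupp.support_subset_singleton.mp h⟩
    simp [h, Finsupp.single_eq_single_iff]
  · rw [if_neg h, if_neg]
    rintro rfl
    exact h Finsupp.support_single_subset

end MvPowerSeries

namespace MvPolynomial

theorem isHomogeneous_esymm (σ R : Type*) [CommSemiring R] [Fintype σ] (n : ℕ) :
    (esymm σ R n).IsHomogeneous n := by
  refine IsHomogeneous.sum _ _ _ fun t ht => ?_
  simpa [(Finset.mem_powersetCard.mp ht).2] using
    IsHomogeneous.prod t (fun i => X (R := R) i) (fun _ => 1) fun i _ => isHomogeneous_X R i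

end MvPolynomial

namespace PowerSeries

variable (A : Type*) [CommRing A] [Algebra ℚ A]

/-- `(1 - e^{-X}) / X`. -/
noncomputable def oneSubExpNegDivX : PowerSeries A :=
  mk fun n => algebraMap ℚ A ((-1) ^ n / (n + 1).factorial)

theorem coeff_evalNegHom_exp (n : ℕ) :
    coeff n (evalNegHom (exp A)) = algebraMap ℚ A ((-1) ^ n / n.factorial) := by
  simp [evalNegHom, coeff_rescale, coeff_exp, div_eq_mul_inv]

theorem X_mul_oneSubExpNegDivX : X * oneSubExpNegDivX A = 1 - evalNegHom (exp A) := by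
  ext (_ | n)
  · rw [coeff_zero_X_mul, map_sub, coeff_evalNegHom_exp]
    simp
  · simp [coeff_succ_X_mul, oneSubExpNegDivX, coeff_evalNegHom_exp, pow_succ, neg_div]

theorem bernoulli'PowerSeries_mul_oneSubExpNegDivX :
    bernoulli'PowerSeries A * oneSubExpNegDivX A = 1 := by
  refine X_mul_cancel ?_
  linear_combination evalNegHom (exp A) * bernoulli'PowerSeries_mul_exp_sub_one A
    + bernoulli'PowerSeries A * X_mul_oneSubExpNegDivX A
    + (X - bernoulli'PowerSeries A) * exp_mul_exp_neg_eq_one (A := A)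

theorem evalNegHom_exp_mul_bernoulli'PowerSeries :
    evalNegHom (exp A) * bernoulli'PowerSeries A = bernoulliPowerSeries A := by
  refine X_mul_cancel ?_
  linear_combination X * bernoulliPowerSeries A * bernoulli'PowerSeries_mul_oneSubExpNegDivX A
    - bernoulliPowerSeries A * bernoulli'PowerSeries A * X_mul_oneSubExpNegDivX A
    + bernoulliPowerSeries A * bernoulli'PowerSeries A * exp_mul_exp_neg_eq_one (A := A)
    - bernoulli'PowerSeries A * evalNegHom (exp A) * bernoulliPowerSeries_mul_exp_sub_one A

end PowerSeries

/-- `720 χ(X, Ω²_X)` as a polynomial in the Chern classes `cₖ = eₖ(x₁, …, x₄)`. -/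
noncomputable def hrrPolynomial : MvPowerSeries (Fin 4) ℚ :=
  -6 * esymmPS 1 ^ 4 + 24 * esymmPS 1 ^ 2 * esymmPS 2 + 18 * esymmPS 2 ^ 2
    - 114 * esymmPS 1 * esymmPS 3 + 474 * esymmPS 4

open MvPolynomial in
theorem coeff_hrrPolynomial_of_degree_ne {d : Fin 4 →₀ ℕ} (hd : (d.sum fun _ n => n) ≠ 4) :
    MvPowerSeries.coeff d hrrPolynomial = 0 := by
  have e (k : ℕ) := isHomogeneous_esymm (Fin 4) ℚ k
  have h1 : (C (-6) * esymm (Fin 4) ℚ 1 ^ 4).IsHomogeneous 4 := ((e 1).pow 4).C_mul _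
  have h2 : (C 24 * esymm (Fin 4) ℚ 1 ^ 2 * esymm (Fin 4) ℚ 2).IsHomogeneous 4 := by
    rw [mul_assoc]
    exact (((e 1).pow 2).mul (e 2)).C_mul _
  have h3 : (C 18 * esymm (Fin 4) ℚ 2 ^ 2).IsHomogeneous 4 := ((e 2).pow 2).C_mul _
  have h4 : (C 114 * (esymm (Fin 4) ℚ 1 * esymm (Fin 4) ℚ 3)).IsHomogeneous 4 :=
    ((e 1).mul (e 3)).C_mul _
  have h5 : (C 474 * esymm (Fin 4) ℚ 4).IsHomogeneous 4 := (e 4).C_mul _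
  rw [← (((h1.add h2).add h3).sub h4 |>.add h5).coeff_eq_zero hd, ← coeff_coe,
    ← coeToMvPowerSeries.ringHom_apply]
  congr 1
  simp only [map_add, map_sub, map_mul, map_pow, coeToMvPowerSeries.ringHom_apply, map_neg,
    map_ofNat, hrrPolynomial, esymmPS]
  ring

section FourVariables

open MvPowerSeries

theorem oneSubExpNegDivX_eq_prodUnivariate (i : Fin 4) :
    oneSubExpNegDivX i =
      prodUnivariate (Pi.mulSingle i (PowerSeries.oneSubExpNegDivX ℚ)) := by
  ext d
  rw [coeff_prodUnivariate_mulSingle]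
  simp [oneSubExpNegDivX, PowerSeries.oneSubExpNegDivX, MvPowerSeries.coeff_apply]

theorem expNegSum_eq_prodUnivariate (s : Finset (Fin 4)) :
    expNegSum s = prodUnivariate fun i =>
      if i ∈ s then PowerSeries.evalNegHom (PowerSeries.exp ℚ) else 1 := by
  ext d
  rw [coeff_prodUnivariate_ite s (by
    simp [← PowerSeries.coeff_zero_eq_constantCoeff_apply, PowerSeries.coeff_evalNegHom_exp])]
  simp [expNegSum, MvPowerSeries.coeff_apply, PowerSeries.coeff_evalNegHom_exp,
    Finsupp.sum_fintype, Finsupp.prod_fintype, Finset.prod_div_distrib,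
    Finset.prod_pow_eq_pow_sum]

theorem eq_prodUnivariate_bernoulli' {T : MvPowerSeries (Fin 4) ℚ} {i : Fin 4}
    (hT : T * oneSubExpNegDivX i = 1) :
    T = prodUnivariate (Pi.mulSingle i (bernoulli'PowerSeries ℚ)) := by
  refine left_inv_eq_right_inv hT ?_
  rw [oneSubExpNegDivX_eq_prodUnivariate, ← prodUnivariate_mul, ← Pi.mulSingle_mul, mul_comm,
    PowerSeries.bernoulli'PowerSeries_mul_oneSubExpNegDivX, Pi.mulSingle_one, prodUnivariate_one]

theorem expNegSum_mul_prodUnivariate_bernoulli' (s : Finset (Fin 4)) :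
    expNegSum s * prodUnivariate (fun _ => bernoulli'PowerSeries ℚ) =
      prodUnivariate fun i =>
        if i ∈ s then bernoulliPowerSeries ℚ else bernoulli'PowerSeries ℚ := by
  rw [expNegSum_eq_prodUnivariate, ← prodUnivariate_mul]
  congr 1
  ext1 i
  split_ifs <;> simp [*, PowerSeries.evalNegHom_exp_mul_bernoulli'PowerSeries]

theorem hrrPolynomial_eq_monomials : hrrPolynomial =
    (-6 : ℚ) • (X 0 ^ 4 + X 1 ^ 4 + X 2 ^ 4 + X 3 ^ 4)
    + (30 : ℚ) • (X 0 ^ 2 * X 1 ^ 2 + X 0 ^ 2 * X 2 ^ 2 + X 0 ^ 2 * X 3 ^ 2 + X 1 ^ 2 * X 2 ^ 2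
      + X 1 ^ 2 * X 3 ^ 2 + X 2 ^ 2 * X 3 ^ 2)
    - (30 : ℚ) • (X 0 ^ 2 * X 1 * X 2 + X 0 ^ 2 * X 1 * X 3 + X 0 ^ 2 * X 2 * X 3
      + X 1 ^ 2 * X 0 * X 2 + X 1 ^ 2 * X 0 * X 3 + X 1 ^ 2 * X 2 * X 3
      + X 2 ^ 2 * X 0 * X 1 + X 2 ^ 2 * X 0 * X 3 + X 2 ^ 2 * X 1 * X 3
      + X 3 ^ 2 * X 0 * X 1 + X 3 ^ 2 * X 0 * X 2 + X 3 ^ 2 * X 1 * X 2)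
    + (270 : ℚ) • (X 0 * X 1 * X 2 * X 3) := by
  simp [hrrPolynomial, esymmPS, MvPolynomial.esymm_eq_multiset_esymm, Fin.univ_val_map,
    List.ofFn_succ, Multiset.esymm, ← Multiset.cons_coe, Multiset.powersetCard_cons,
    Multiset.powersetCard_one, Fin.sum_univ_four, MvPowerSeries.smul_eq_C_mul, map_ofNat]
  ring

theorem sum_filter_lt_fin_four {M : Type*} [AddCommMonoid M] (f : Fin 4 × Fin 4 → M) :
    ∑ p ∈ Finset.univ.filter (fun p : Fin 4 × Fin 4 => p.1 < p.2), f p =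
      f (0, 1) + f (0, 2) + f (0, 3) + f (1, 2) + f (1, 3) + f (2, 3) := by
  rw [Finset.sum_filter, Fintype.sum_prod_type]
  simp [Fin.sum_univ_four]
  abel

theorem coeff_sum_expNegSum_mul_prodUnivariate_bernoulli' {d : Fin 4 →₀ ℕ}
    (hd : (d.sum fun _ n => n) = 4) :
    MvPowerSeries.coeff d ((∑ p ∈ Finset.univ.filter (fun p : Fin 4 × Fin 4 => p.1 < p.2),
        expNegSum {p.1, p.2}) * prodUnivariate fun _ => bernoulli'PowerSeries ℚ) =
      720⁻¹ * MvPowerSeries.coeff d hrrPolynomial := by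
  rw [Finset.sum_mul, sum_filter_lt_fin_four, hrrPolynomial_eq_monomials]
  simp only [expNegSum_mul_prodUnivariate_bernoulli', X_eq_prodUnivariate,
    ← prodUnivariate_pow, ← prodUnivariate_mul, map_add, map_sub, LinearMap.map_smul_of_tower,
    coeff_prodUnivariate, Fin.prod_univ_four, Pi.mul_apply, Pi.pow_apply, Pi.mulSingle_apply]
  simp only [Fin.isValue, Finset.mem_insert, Finset.mem_singleton, Fin.reduceEq, zero_ne_one,
    one_ne_zero, or_false, or_true, or_self, ↓reduceIte, bernoulliPowerSeries,
    bernoulli'PowerSeries, Algebra.algebraMap_self, RingHom.id_apply, PowerSeries.coeff_mk,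
    PowerSeries.coeff_X_pow, PowerSeries.coeff_X, PowerSeries.coeff_one, one_pow, mul_ite, mul_one,
    mul_zero, one_mul, smul_eq_mul]
  rw [Finsupp.sum_fintype _ _ fun _ => rfl, Fin.sum_univ_four] at hd
  generalize d 0 = a, d 1 = b, d 2 = c, d 3 = e at *
  obtain rfl : e = 4 - a - b - c := by omega
  have bernoulli_three : bernoulli 3 = 0 := bernoulli_eq_zero_of_odd (by decide) (by norm_num)
  have bernoulli_four : bernoulli 4 = -1 / 30 := by
    rw [bernoulli_eq_bernoulli'_of_ne_one (by norm_num), bernoulli'_four]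
  have : a ≤ 4 := by omega
  have : b ≤ 4 := by omega
  have : c ≤ 4 := by omega
  interval_cases a <;> interval_cases b <;> interval_cases c <;>
    first
    | omega
    | norm_num [Nat.factorial, bernoulli_three, bernoulli_four, bernoulli'_zero, bernoulli'_one,
        bernoulli'_two, bernoulli'_three, bernoulli'_four]

end FourVariables

theorem hrr_omega_two_degree_four
    (T : Fin 4 → MvPowerSeries (Fin 4) ℚ)
    (hT : ∀ i, T i * oneSubExpNegDivX i = 1) :
    homogeneousComponent4
        ((∑ p ∈ Finset.univ.filter (fun p : Fin 4 × Fin 4 => p.1 < p.2),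
            expNegSum {p.1, p.2}) * (T 0 * T 1 * T 2 * T 3)) =
      (720 : ℚ)⁻¹ •
        (-6 * (esymmPS 1) ^ 4 + 24 * (esymmPS 1) ^ 2 * esymmPS 2 + 18 * (esymmPS 2) ^ 2
          - 114 * esymmPS 1 * esymmPS 3 + 474 * esymmPS 4) := by
  have hTodd : T 0 * T 1 * T 2 * T 3 =
      MvPowerSeries.prodUnivariate fun _ => bernoulli'PowerSeries ℚ := by
    simp only [fun i => eq_prodUnivariate_bernoulli' (hT i), ← MvPowerSeries.prodUnivariate_mul]
    congr 1
    ext1 i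
    fin_cases i <;> simp
  ext d
  rw [hTodd, MvPowerSeries.coeff_smul, ← hrrPolynomial]
  change (if _ then _ else _) = _
  split_ifs with hd
  · exact coeff_sum_expNegSum_mul_prodUnivariate_bernoulli' hd
  · rw [coeff_hrrPolynomial_of_degree_ne hd, mul_zero]
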